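/- Let b > 0 be real, let m ≥ 0, d ≥ 1, N ≥ 0 be integers, and set r := b/(2(N+1)+m+(d+1)/2). If r < 1, then Σ_{k=N+1}^∞ (b/(2k+m+(d+1)/2))^{4k+2m+d+1} ≤ [1 + 1/(4 ln(1/r))] · r^{4N+2m+d+5}. -/

import Mathlib

/-!
Since `2k + m + (d+1)/2` grows with `k`, the `i`-th term of the tail is at most
`r ^ (4N+2m+d+5) * (r ^ 4) ^ i`, so the tail is at most `r ^ (4N+2m+d+5) / (1 - r ^ 4)`.
For `0 < q < 1`, `1 / (1 - q) = 1 + 1 / (1/q - 1) ≤ 1 + 1 / log (1/q)` because `log x ≤ x - 1`;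
take `q = r ^ 4`.
-/

open Real

theorem summable_and_tsum_le_of_le_geometric {f : ℕ → ℝ} {a q : ℝ} (hf : ∀ i, 0 ≤ f i)
    (hfq : ∀ i, f i ≤ a * q ^ i) (hq₀ : 0 ≤ q) (hq₁ : q < 1) :
    Summable f ∧ ∑' i, f i ≤ a * (1 - q)⁻¹ := by
  have hgeom : HasSum (fun i ↦ a * q ^ i) (a * (1 - q)⁻¹) :=
    (hasSum_geometric_of_lt_one hq₀ hq₁).mul_left a
  have hs : Summable f := hgeom.summable.of_nonneg_of_le hf hfq
  exact ⟨hs, hasSum_le hfq hs.hasSum hgeom⟩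

theorem inv_one_sub_le_one_add_inv_log_inv {q : ℝ} (hq₀ : 0 < q) (hq₁ : q < 1) :
    (1 - q)⁻¹ ≤ 1 + (log q⁻¹)⁻¹ := by
  have hlog_pos : 0 < log q⁻¹ := log_pos (one_lt_inv₀ hq₀ |>.mpr hq₁)
  calc (1 - q)⁻¹ = 1 + (q⁻¹ - 1)⁻¹ := by
        have : 1 - q ≠ 0 := by linarith
        field_simp
        ring
    _ ≤ 1 + (log q⁻¹)⁻¹ := by
        gcongr
        exact log_le_sub_one_of_pos (inv_pos.mpr hq₀)

theorem stmt_16_general (b : ℝ) (hb : 0 < b) (m d N : ℕ)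
    (r : ℝ) (hr : r = b / (2 * ((N : ℝ) + 1) + (m : ℝ) + ((d : ℝ) + 1) / 2)) (hr1 : r < 1) :
    Summable (fun i : ℕ =>
      (b / (2 * ((N : ℝ) + 1 + (i : ℝ)) + (m : ℝ) + ((d : ℝ) + 1) / 2)) ^
        (4 * (N + 1 + i) + 2 * m + d + 1)) ∧
    (∑' i : ℕ,
      (b / (2 * ((N : ℝ) + 1 + (i : ℝ)) + (m : ℝ) + ((d : ℝ) + 1) / 2)) ^
        (4 * (N + 1 + i) + 2 * m + d + 1)) ≤
      (1 + 1 / (4 * Real.log (1 / r))) * r ^ (4 * N + 2 * m + d + 5) := by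
  have hr₀ : 0 < r := hr ▸ by positivity
  have hbase (i : ℕ) : b / (2 * ((N : ℝ) + 1 + i) + m + ((d : ℝ) + 1) / 2) ≤ r := by
    rw [hr]
    refine div_le_div_of_nonneg_left hb.le (by positivity) ?_
    linarith [(i.cast_nonneg : (0 : ℝ) ≤ i)]
  have hterm (i : ℕ) : (b / (2 * ((N : ℝ) + 1 + i) + m + ((d : ℝ) + 1) / 2)) ^
      (4 * (N + 1 + i) + 2 * m + d + 1) ≤ r ^ (4 * N + 2 * m + d + 5) * (r ^ 4) ^ i := by
    rw [← pow_mul, ← pow_add, show 4 * N + 2 * m + d + 5 + 4 * i = 4 * (N + 1 + i) + 2 * m + d + 1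
      by ring]
    exact pow_le_pow_left₀ (by positivity) (hbase i) _
  have hr₄ : r ^ 4 < 1 := pow_lt_one₀ hr₀.le hr1 four_ne_zero
  obtain ⟨hsum, htsum⟩ := summable_and_tsum_le_of_le_geometric (fun i ↦ by positivity) hterm
    (by positivity) hr₄
  refine ⟨hsum, htsum.trans ?_⟩
  rw [mul_comm]
  gcongr
  have hlog : 4 * log (1 / r) = log (r ^ 4)⁻¹ := by
    rw [one_div, ← inv_pow, log_pow, Nat.cast_ofNat]
  rw [hlog, one_div (log _)]
  exact inv_one_sub_le_one_add_inv_log_inv (pow_pos hr₀ 4) hr₄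

/-- Elementary tail estimate: for `b > 0` and
`r = b/(2(N+1)+m+(d+1)/2) < 1`,
`Σ_{k=N+1}^∞ (b/(2k+m+(d+1)/2))^{4k+2m+d+1} ≤ [1 + 1/(4 ln(1/r))]·r^{4N+2m+d+5}`. -/
theorem stmt_16 (b : ℝ) (hb : 0 < b) (m d N : ℕ) (hd : 1 ≤ d)
    (r : ℝ) (hr : r = b / (2 * ((N : ℝ) + 1) + (m : ℝ) + ((d : ℝ) + 1) / 2)) (hr1 : r < 1) :
    Summable (fun i : ℕ =>
      (b / (2 * ((N : ℝ) + 1 + (i : ℝ)) + (m : ℝ) + ((d : ℝ) + 1) / 2)) ^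
        (4 * (N + 1 + i) + 2 * m + d + 1)) ∧
    (∑' i : ℕ,
      (b / (2 * ((N : ℝ) + 1 + (i : ℝ)) + (m : ℝ) + ((d : ℝ) + 1) / 2)) ^
        (4 * (N + 1 + i) + 2 * m + d + 1)) ≤
      (1 + 1 / (4 * Real.log (1 / r))) * r ^ (4 * N + 2 * m + d + 5) :=
  stmt_16_general b hb m d N r hr hr1
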